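/- Let (ρ*, F*) ∈ 𝒞_{N,𝒯} minimize B_{N,𝒯} over 𝒞_{N,𝒯} with finite value, let μ > 0, and let (ρ^μ, F^μ) ∈ 𝒞_{N,𝒯} minimize B_{N,𝒯} + μ J_{N,𝒯} over 𝒞_{N,𝒯} with finite value. Then 0 ≤ B_{N,𝒯}(ρ^μ, F^μ) − B_{N,𝒯}(ρ*, F*) ≤ μ (N/(N+1)) |Ω|, where |Ω| = Σ_{K'∈𝒯'} m_{K'}. -/

import Mathlib

open scoped BigOperators ENNReal RealInnerProductSpace
open Finset

namespace OTFV

/-- The Benamou–Brenier action density for a scalar flux value. -/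
noncomputable def Bact (p q : ℝ) : ℝ≥0∞ :=
  if 0 < p then ENNReal.ofReal (q ^ 2 / (2 * p))
  else if p = 0 ∧ q = 0 then 0 else ⊤

/-- Combinatorial/metric data of an admissible TPFA mesh: cells `T`, internal
edges `E`; an edge `σ` joins the two distinct cells `e1 σ` and `e2 σ`. -/
structure Mesh (T E : Type*) where
  e1 : E → T
  e2 : E → T
  ne : ∀ σ, e1 σ ≠ e2 σ
  m : T → ℝ
  m_pos : ∀ K, 0 < m K
  mS : E → ℝ
  mS_pos : ∀ σ, 0 < mS σ
  dS : E → ℝ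
  dS_pos : ∀ σ, 0 < dS σ
  d1 : E → ℝ   -- d_{K,σ} for K = e1 σ
  d2 : E → ℝ   -- d_{L,σ} for L = e2 σ
  d1_pos : ∀ σ, 0 < d1 σ
  d2_pos : ∀ σ, 0 < d2 σ
  d_sum : ∀ σ, d1 σ + d2 σ = dS σ

variable {T T' E : Type*}

/-- A conservative flux is encoded by its value `F σ = F_{K,σ}` on the side `K = e1 σ`
(so that `F_{L,σ} = -F σ` for `L = e2 σ`).  Discrete divergence. -/
noncomputable def divT [Fintype E] [DecidableEq T] (M : Mesh T E) (F : E → ℝ) (K : T) : ℝ :=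
  (∑ σ, ((if M.e1 σ = K then F σ else 0) + (if M.e2 σ = K then -F σ else 0)) * M.mS σ) / M.m K

/-- Discrete gradient, oriented from `e1 σ` to `e2 σ` (the `(K,σ)` component, `K = e1 σ`). -/
noncomputable def gradS (M : Mesh T E) (a : T → ℝ) (σ : E) : ℝ :=
  (a (M.e2 σ) - a (M.e1 σ)) / M.dS σ

/-- Linear (weighted arithmetic mean) reconstruction on edges. -/
noncomputable def linRec (M : Mesh T E) (a : T → ℝ) (σ : E) : ℝ :=
  (M.d1 σ / M.dS σ) * a (M.e1 σ) + (M.d2 σ / M.dS σ) * a (M.e2 σ)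

/-- Injection from coarse densities to fine densities, `p` maps a fine cell to its coarse cell. -/
def inj (p : T → T') (ρ : T' → ℝ) : T → ℝ := fun K => ρ (p K)

/-- Mass of a coarse cell. -/
noncomputable def coarseM [Fintype T] [DecidableEq T'] (M : Mesh T E) (p : T → T') (K' : T') : ℝ :=
  ∑ K ∈ Finset.univ.filter (fun K => p K = K'), M.m K

/-- Adjoint of the injection. -/
noncomputable def injAdj [Fintype T] [DecidableEq T'] (M : Mesh T E) (p : T → T')
    (a : T → ℝ) (K' : T') : ℝ :=
  (∑ K ∈ Finset.univ.filter (fun K => p K = K'), a K * M.m K) / coarseM M p K'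

/-- Adjoint of the linear reconstruction, `(L_Σ^* u)_K = Σ_{σ∈Σ_K} u_σ m_σ d_{K,σ}/m_K`. -/
noncomputable def linRecAdj [Fintype E] [DecidableEq T] (M : Mesh T E) (u : E → ℝ) (K : T) : ℝ :=
  (∑ σ, ((if M.e1 σ = K then u σ * M.mS σ * M.d1 σ else 0) +
          (if M.e2 σ = K then u σ * M.mS σ * M.d2 σ else 0))) / M.m K

/-- `R_{𝒯'} = 𝕀^* ∘ L_Σ^*`. -/
noncomputable def coarseRec [Fintype T] [Fintype E] [DecidableEq T] [DecidableEq T']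
    (M : Mesh T E) (p : T → T') (u : E → ℝ) (K' : T') : ℝ :=
  injAdj M p (linRecAdj M u) K'

/-- Weighted scalar product on the coarse space. -/
noncomputable def iprodC [Fintype T] [Fintype T'] [DecidableEq T'] (M : Mesh T E) (p : T → T')
    (a b : T' → ℝ) : ℝ :=
  ∑ K', a K' * b K' * coarseM M p K'

/-- The discrete Benamou–Brenier functional `B_{N,𝒯}`; the time step is `τ = 1/(N+1)`,
`ρ k.succ` stands for `ρ^k` and `ρ k.castSucc` for `ρ^{k-1}`, `k = 1, …, N+1`. -/
noncomputable def Benergy [Fintype E] [Fintype T'] (M : Mesh T E) (p : T → T') (N : ℕ)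
    (ρ : Fin (N+2) → T' → ℝ) (F : Fin (N+1) → E → ℝ) : ℝ≥0∞ :=
  if ∀ k K', 0 ≤ ρ k K' then
    ∑ k : Fin (N+1),
      ENNReal.ofReal ((1:ℝ)/(N+1)) *
        ∑ σ, Bact (linRec M (inj p (fun K' => (ρ k.succ K' + ρ k.castSucc K') / 2)) σ) (F k σ) *
          ENNReal.ofReal (M.mS σ * M.dS σ)
  else ⊤

/-- The discrete continuity equation. -/
def ContEq [Fintype E] [DecidableEq T] (M : Mesh T E) (p : T → T') (N : ℕ)
    (ρ : Fin (N+2) → T' → ℝ) (F : Fin (N+1) → E → ℝ) : Prop :=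
  ∀ (k : Fin (N+1)) (K : T),
    (ρ k.succ (p K) - ρ k.castSucc (p K)) / ((1:ℝ)/(N+1)) + divT M (F k) K = 0

/-- The constraint set `𝒞_{N,𝒯}`. -/
def Cset [Fintype E] [DecidableEq T] (M : Mesh T E) (p : T → T') (N : ℕ)
    (ρin ρf : T' → ℝ) : Set ((Fin (N+2) → T' → ℝ) × (Fin (N+1) → E → ℝ)) :=
  {x | x.1 0 = ρin ∧ x.1 (Fin.last (N+1)) = ρf ∧ ContEq M p N x.1 x.2}

/-- The (halved, squared) discrete Wasserstein distance: `W² = 2 inf B`. -/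
noncomputable def Wdist2 [Fintype E] [Fintype T'] [DecidableEq T] (M : Mesh T E) (p : T → T')
    (N : ℕ) (ρin ρf : T' → ℝ) : ℝ≥0∞ :=
  2 * ⨅ (x : (Fin (N+2) → T' → ℝ) × (Fin (N+1) → E → ℝ)) (_ : x ∈ Cset M p N ρin ρf),
    Benergy M p N x.1 x.2

/-- Logarithmic barrier. -/
noncomputable def Jlog (x : ℝ) : EReal := if 0 < x then ((- Real.log x : ℝ) : EReal) else ⊤

/-- The barrier functional `J_{N,𝒯}` (only the interior times `k = 1, …, N`). -/
noncomputable def Jbar [Fintype T] [Fintype T'] [DecidableEq T'] (M : Mesh T E) (p : T → T')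
    (N : ℕ) (ρ : Fin (N+2) → T' → ℝ) : EReal :=
  ∑ k : Fin N, (((1:ℝ)/(N+1) : ℝ) : EReal) *
    ∑ K', Jlog (ρ (k.succ.castSucc) K') * ((coarseM M p K' : ℝ) : EReal)

/-- Perturbed objective `B_{N,𝒯} + μ J_{N,𝒯}`, with values in `EReal`. -/
noncomputable def Pobj [Fintype T] [Fintype T'] [Fintype E] [DecidableEq T'] (M : Mesh T E)
    (p : T → T') (N : ℕ) (μ : ℝ) (ρ : Fin (N+2) → T' → ℝ) (F : Fin (N+1) → E → ℝ) : EReal :=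
  (Benergy M p N ρ F : EReal) + (μ : EReal) * Jbar M p N ρ

/-- Connectivity of the graph of cells induced by the internal edges. -/
def MeshConnected (M : Mesh T E) : Prop :=
  ∀ K L : T, Relation.ReflTransGen
    (fun a b => ∃ σ, (M.e1 σ = a ∧ M.e2 σ = b) ∨ (M.e1 σ = b ∧ M.e2 σ = a)) K L

end OTFV

open OTFV

/-!
Mixing the two minimisers, `x_t = (1 - t) x* + t x^μ` is again admissible, since the constraint
set is convex. Convexity of `B` bounds `B(x_t)`, and `ρ_t ≥ t ρ^μ` gives
`J(ρ_t) ≤ J(ρ^μ) - (N/(N+1)) |Ω| log t`. Testing the optimality of `x^μ` against `x_t` yields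
`(1 - t) (B(x^μ) - B(x*)) ≤ μ (N/(N+1)) |Ω| (-log t)`, and `-log t ≤ 1/t - 1` lets `t → 1`.
-/

lemma le_of_forall_one_sub_mul_le_mul_neg_log {d C : ℝ} (hC : 0 ≤ C)
    (h : ∀ t : ℝ, 0 < t → t < 1 → (1 - t) * d ≤ C * -Real.log t) : d ≤ C := by
  refine (le_iff_forall_one_lt_le_mul₀ hC).2 fun ε hε => ?_
  have hε₀ : 0 < ε := by linarith
  have hmix := h ε⁻¹ (inv_pos.2 hε₀) (inv_lt_one_of_one_lt₀ hε)
  have hlog : -Real.log ε⁻¹ ≤ ε - 1 := by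
    rw [Real.log_inv, neg_neg]; exact Real.log_le_sub_one_of_pos hε₀
  have hpos : 0 < 1 - ε⁻¹ := by linarith [inv_lt_one_of_one_lt₀ hε]
  refine le_of_mul_le_mul_left ?_ hpos
  calc (1 - ε⁻¹) * d ≤ C * (ε - 1) := hmix.trans (mul_le_mul_of_nonneg_left hlog hC)
    _ = (1 - ε⁻¹) * (C * ε) := by field_simp

namespace EReal

lemma coe_finset_sum {ι : Type*} (s : Finset ι) (f : ι → ℝ) :
    ((∑ i ∈ s, f i : ℝ) : EReal) = ∑ i ∈ s, (f i : EReal) :=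
  map_sum (⟨⟨(↑), coe_zero⟩, coe_add⟩ : ℝ →+ EReal) f s

lemma finset_sum_ne_bot {ι : Type*} {s : Finset ι} {f : ι → EReal} (h : ∀ i ∈ s, f i ≠ ⊥) :
    ∑ i ∈ s, f i ≠ ⊥ := by
  induction s using Finset.cons_induction with
  | empty => simp
  | cons i s hi ih =>
    rw [Finset.sum_cons, ne_eq, add_eq_bot_iff, not_or]
    exact ⟨h i (mem_cons_self i s), ih fun j hj => h j (mem_cons_of_mem hj)⟩

lemma finset_sum_eq_top {ι : Type*} [DecidableEq ι] {s : Finset ι} {f : ι → EReal}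
    (h : ∀ i ∈ s, f i ≠ ⊥) {i : ι} (hi : i ∈ s) (htop : f i = ⊤) : ∑ j ∈ s, f j = ⊤ := by
  rw [← Finset.add_sum_erase s f hi, htop]
  exact top_add_of_ne_bot (finset_sum_ne_bot fun j hj => h j (mem_of_mem_erase hj))

lemma coe_mul_ne_bot {r : ℝ} (hr : 0 ≤ r) {x : EReal} (hx : x ≠ ⊥) : (r : EReal) * x ≠ ⊥ :=
  (mul_ne_bot _ _).2 ⟨Or.inl (coe_ne_bot r), Or.inr hx, Or.inl (coe_ne_top r),
    Or.inl (by exact_mod_cast hr)⟩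

end EReal

namespace OTFV

lemma Bact_cases {p q : ℝ} (h : Bact p q ≠ ⊤) : 0 < p ∨ (p = 0 ∧ q = 0) := by
  unfold Bact at h
  split_ifs at h with h₁ h₂
  exacts [Or.inl h₁, Or.inr h₂, absurd rfl h]

/-- Joint convexity of the perspective `(p, q) ↦ q² / 2p` on `p > 0`. -/
lemma sq_div_two_mul_convex {p₁ p₂ q₁ q₂ s t : ℝ} (hp₁ : 0 < p₁) (hp₂ : 0 < p₂)
    (hs : 0 ≤ s) (ht : 0 ≤ t) (hst : 0 < s * p₁ + t * p₂) :
    (s * q₁ + t * q₂) ^ 2 / (2 * (s * p₁ + t * p₂)) ≤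
      s * (q₁ ^ 2 / (2 * p₁)) + t * (q₂ ^ 2 / (2 * p₂)) := by
  have hrhs : s * (q₁ ^ 2 / (2 * p₁)) + t * (q₂ ^ 2 / (2 * p₂)) =
      (s * q₁ ^ 2 * (2 * p₂) + t * q₂ ^ 2 * (2 * p₁)) / (2 * p₁ * (2 * p₂)) := by
    field_simp
  rw [hrhs, div_le_div_iff₀ (by positivity) (by positivity)]
  nlinarith [mul_nonneg (mul_nonneg hs ht) (sq_nonneg (q₁ * p₂ - q₂ * p₁))]

lemma Bact_convex {p₁ p₂ q₁ q₂ s t : ℝ} (hs : 0 < s) (ht : 0 < t) :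
    Bact (s * p₁ + t * p₂) (s * q₁ + t * q₂) ≤
      ENNReal.ofReal s * Bact p₁ q₁ + ENNReal.ofReal t * Bact p₂ q₂ := by
  by_cases h₁ : Bact p₁ q₁ = ⊤
  · simp [h₁, ENNReal.mul_top, hs]
  by_cases h₂ : Bact p₂ q₂ = ⊤
  · simp [h₂, ENNReal.mul_top, ht]
  rcases Bact_cases h₁ with hp₁ | ⟨rfl, rfl⟩ <;> rcases Bact_cases h₂ with hp₂ | ⟨rfl, rfl⟩
  · have hst : 0 < s * p₁ + t * p₂ := by positivity
    rw [Bact, Bact, Bact, if_pos hst, if_pos hp₁, if_pos hp₂, ← ENNReal.ofReal_mul hs.le,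
      ← ENNReal.ofReal_mul ht.le, ← ENNReal.ofReal_add (by positivity) (by positivity)]
    exact ENNReal.ofReal_le_ofReal (sq_div_two_mul_convex hp₁ hp₂ hs.le ht.le hst)
  · have hsp : 0 < s * p₁ := by positivity
    simp only [Bact, mul_zero, add_zero, if_pos hsp, if_pos hp₁, lt_irrefl, if_false, and_self,
      if_true, ← ENNReal.ofReal_mul hs.le]
    exact ENNReal.ofReal_le_ofReal (le_of_eq (by field_simp))
  · have htp : 0 < t * p₂ := by positivity
    simp only [Bact, mul_zero, zero_add, if_pos htp, if_pos hp₂, lt_irrefl, if_false, and_self,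
      if_true, ← ENNReal.ofReal_mul ht.le]
    exact ENNReal.ofReal_le_ofReal (le_of_eq (by field_simp))
  · simp [Bact]

section

variable {T T' E : Type*}

lemma divT_add_smul [Fintype E] [DecidableEq T] (M : Mesh T E) (F G : E → ℝ) (s t : ℝ) (K : T) :
    divT M (s • F + t • G) K = s * divT M F K + t * divT M G K := by
  simp only [divT, mul_div_assoc', ← add_div, Finset.mul_sum, ← Finset.sum_add_distrib,
    Pi.add_apply, Pi.smul_apply, smul_eq_mul]
  congr 1
  exact Finset.sum_congr rfl fun σ _ => by split_ifs <;> ring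

lemma convex_Cset [Fintype E] [DecidableEq T] (M : Mesh T E) (p : T → T') (N : ℕ)
    (ρin ρf : T' → ℝ) : Convex ℝ (Cset M p N ρin ρf) := by
  rintro x ⟨hx0, hxN, hx⟩ y ⟨hy0, hyN, hy⟩ a b - - hab
  refine ⟨?_, ?_, fun k K => ?_⟩
  · simp only [Prod.fst_add, Prod.smul_fst, Pi.add_apply, Pi.smul_apply, hx0, hy0,
      Convex.combo_self hab]
  · simp only [Prod.fst_add, Prod.smul_fst, Pi.add_apply, Pi.smul_apply, hxN, hyN,
      Convex.combo_self hab]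
  · have hxk := hx k K
    have hyk := hy k K
    simp only [Prod.fst_add, Prod.smul_fst, Prod.snd_add, Prod.smul_snd, Pi.add_apply,
      Pi.smul_apply, smul_eq_mul, divT_add_smul] at hxk hyk ⊢
    linear_combination a * hxk + b * hyk

lemma nonneg_of_Benergy_ne_top [Fintype E] [Fintype T'] {M : Mesh T E} {p : T → T'} {N : ℕ}
    {ρ : Fin (N+2) → T' → ℝ} {F : Fin (N+1) → E → ℝ} (h : Benergy M p N ρ F ≠ ⊤) :
    ∀ k K', 0 ≤ ρ k K' := by
  by_contra hρ
  exact h (if_neg hρ)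

lemma Benergy_convex [Fintype E] [Fintype T'] (M : Mesh T E) (p : T → T') (N : ℕ)
    (ρ₁ ρ₂ : Fin (N+2) → T' → ℝ) (F₁ F₂ : Fin (N+1) → E → ℝ) {s t : ℝ} (hs : 0 < s) (ht : 0 < t) :
    Benergy M p N (s • ρ₁ + t • ρ₂) (s • F₁ + t • F₂) ≤
      ENNReal.ofReal s * Benergy M p N ρ₁ F₁ + ENNReal.ofReal t * Benergy M p N ρ₂ F₂ := by
  by_cases h₁ : Benergy M p N ρ₁ F₁ = ⊤
  · simp [h₁, ENNReal.mul_top, hs]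
  by_cases h₂ : Benergy M p N ρ₂ F₂ = ⊤
  · simp [h₂, ENNReal.mul_top, ht]
  have hρ₁ := nonneg_of_Benergy_ne_top h₁
  have hρ₂ := nonneg_of_Benergy_ne_top h₂
  unfold Benergy
  rw [if_pos fun k K' => by
      simp only [Pi.add_apply, Pi.smul_apply, smul_eq_mul]; positivity [hρ₁ k K', hρ₂ k K'],
    if_pos hρ₁, if_pos hρ₂]
  simp only [Finset.mul_sum, ← Finset.sum_add_distrib]
  gcongr with k _ σ _
  have hlin : linRec M (inj p fun K' => ((s • ρ₁ + t • ρ₂) k.succ K' +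
      (s • ρ₁ + t • ρ₂) k.castSucc K') / 2) σ =
      s * linRec M (inj p fun K' => (ρ₁ k.succ K' + ρ₁ k.castSucc K') / 2) σ +
      t * linRec M (inj p fun K' => (ρ₂ k.succ K' + ρ₂ k.castSucc K') / 2) σ := by
    simp only [linRec, inj, Pi.add_apply, Pi.smul_apply, smul_eq_mul]; ring
  calc _ ≤ ENNReal.ofReal ((1:ℝ)/(N+1)) *
        ((ENNReal.ofReal s * Bact (linRec M (inj p fun K' =>
          (ρ₁ k.succ K' + ρ₁ k.castSucc K') / 2) σ) (F₁ k σ) +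
        ENNReal.ofReal t * Bact (linRec M (inj p fun K' =>
          (ρ₂ k.succ K' + ρ₂ k.castSucc K') / 2) σ) (F₂ k σ)) *
        ENNReal.ofReal (M.mS σ * M.dS σ)) := by
        gcongr
        rw [hlin]
        exact Bact_convex hs ht
    _ = _ := by ring

end

section

variable {T T' E : Type*} [Fintype T] [DecidableEq T']

lemma coarseM_nonneg (M : Mesh T E) (p : T → T') (K' : T') : 0 ≤ coarseM M p K' :=
  Finset.sum_nonneg fun K _ => (M.m_pos K).le

lemma Jlog_mul_coe_ne_bot (x : ℝ) {m : ℝ} (hm : 0 ≤ m) : Jlog x * (m : EReal) ≠ ⊥ := by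
  have hJ : Jlog x ≠ ⊥ := by unfold Jlog; split_ifs <;> simp
  exact (EReal.mul_ne_bot _ _).2 ⟨Or.inl hJ, Or.inr (EReal.coe_ne_bot m),
    Or.inr (by exact_mod_cast hm), Or.inr (EReal.coe_ne_top m)⟩

variable [Fintype T']

noncomputable def JbarR (M : Mesh T E) (p : T → T') (N : ℕ) (ρ : Fin (N+2) → T' → ℝ) : ℝ :=
  ∑ k : Fin N, ((1:ℝ)/(N+1)) * ∑ K', -Real.log (ρ k.succ.castSucc K') * coarseM M p K'

lemma Jbar_ne_bot (M : Mesh T E) (p : T → T') (N : ℕ) (ρ : Fin (N+2) → T' → ℝ) :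
    Jbar M p N ρ ≠ ⊥ :=
  EReal.finset_sum_ne_bot fun _ _ => EReal.coe_mul_ne_bot (by positivity)
    (EReal.finset_sum_ne_bot fun K' _ => Jlog_mul_coe_ne_bot _ (coarseM_nonneg M p K'))

lemma pos_of_Jbar_ne_top {M : Mesh T E} {p : T → T'} {N : ℕ} {ρ : Fin (N+2) → T' → ℝ}
    (h : Jbar M p N ρ ≠ ⊤) (k : Fin N) (K' : T') (hK' : 0 < coarseM M p K') :
    0 < ρ k.succ.castSucc K' := by
  by_contra hρ
  refine h (EReal.finset_sum_eq_top (fun _ _ => EReal.coe_mul_ne_bot (by positivity)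
    (EReal.finset_sum_ne_bot fun L _ => Jlog_mul_coe_ne_bot _ (coarseM_nonneg M p L)))
    (Finset.mem_univ k) ?_)
  rw [EReal.finset_sum_eq_top (fun L _ => Jlog_mul_coe_ne_bot _ (coarseM_nonneg M p L))
    (Finset.mem_univ K') (by rw [Jlog, if_neg hρ, EReal.top_mul_of_pos (by exact_mod_cast hK')])]
  exact EReal.coe_mul_top_of_pos (by positivity)

lemma Jbar_eq_coe_JbarR {M : Mesh T E} {p : T → T'} {N : ℕ} {ρ : Fin (N+2) → T' → ℝ}
    (hρ : ∀ (k : Fin N) K', 0 < coarseM M p K' → 0 < ρ k.succ.castSucc K') :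
    Jbar M p N ρ = JbarR M p N ρ := by
  simp only [Jbar, JbarR, EReal.coe_finset_sum, EReal.coe_mul]
  refine Finset.sum_congr rfl fun k _ => congrArg _ (Finset.sum_congr rfl fun K' _ => ?_)
  rcases (coarseM_nonneg M p K').eq_or_lt with hm | hm
  · simp [← hm]
  · rw [Jlog, if_pos (hρ k K' hm)]

lemma JbarR_le_of_mul_le (M : Mesh T E) (p : T → T') (N : ℕ) {ρ ρ' : Fin (N+2) → T' → ℝ} {t : ℝ}
    (ht : 0 < t) (hρ' : ∀ (k : Fin N) K', 0 < coarseM M p K' → 0 < ρ' k.succ.castSucc K')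
    (hle : ∀ k K', t * ρ' k K' ≤ ρ k K') :
    JbarR M p N ρ ≤ JbarR M p N ρ' + N / (N+1) * (∑ K', coarseM M p K') * -Real.log t := by
  have hconst : (N : ℝ) / (N+1) * (∑ K', coarseM M p K') * -Real.log t =
      ∑ _k : Fin N, (1:ℝ)/(N+1) * ∑ K', -Real.log t * coarseM M p K' := by
    rw [Finset.sum_const, Finset.card_univ, Fintype.card_fin, nsmul_eq_mul, ← Finset.mul_sum]
    ring
  rw [hconst, JbarR, JbarR, ← Finset.sum_add_distrib]
  gcongr with k _
  rw [← mul_add, ← Finset.sum_add_distrib]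
  gcongr with K' _
  rcases (coarseM_nonneg M p K').eq_or_lt with hm | hm
  · simp [← hm]
  have hρ'pos := hρ' k K' hm
  have hlog := Real.log_le_log (by positivity) (hle k.succ.castSucc K')
  rw [Real.log_mul ht.ne' hρ'pos.ne'] at hlog
  nlinarith

variable [Fintype E] {M : Mesh T E} {p : T → T'} {N : ℕ}

lemma Benergy_ne_top_and_Jbar_ne_top {μ : ℝ} (hμ : 0 < μ) {ρ : Fin (N+2) → T' → ℝ}
    {F : Fin (N+1) → E → ℝ} (h : Pobj M p N μ ρ F ≠ ⊤) :
    Benergy M p N ρ F ≠ ⊤ ∧ Jbar M p N ρ ≠ ⊤ := by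
  refine ⟨fun hB => h ?_, fun hJ => h ?_⟩
  · rw [Pobj, hB, EReal.coe_ennreal_top]
    exact EReal.top_add_of_ne_bot (EReal.coe_mul_ne_bot hμ.le (Jbar_ne_bot M p N ρ))
  · rw [Pobj, hJ, EReal.coe_mul_top_of_pos hμ]
    exact EReal.add_top_of_ne_bot (EReal.coe_ennreal_ne_bot _)

lemma Pobj_eq_coe {μ : ℝ} {ρ : Fin (N+2) → T' → ℝ} {F : Fin (N+1) → E → ℝ}
    (hB : Benergy M p N ρ F ≠ ⊤)
    (hρ : ∀ (k : Fin N) K', 0 < coarseM M p K' → 0 < ρ k.succ.castSucc K') :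
    Pobj M p N μ ρ F = (((Benergy M p N ρ F).toReal + μ * JbarR M p N ρ : ℝ) : EReal) := by
  rw [Pobj, Jbar_eq_coe_JbarR hρ, ← EReal.coe_ennreal_toReal hB, ← EReal.coe_mul, ← EReal.coe_add]

lemma Pobj_convex_combo_le {μ t : ℝ} (hμ : 0 ≤ μ) (ht₀ : 0 < t) (ht₁ : t < 1)
    {x y : (Fin (N+2) → T' → ℝ) × (Fin (N+1) → E → ℝ)}
    (hx : Benergy M p N x.1 x.2 ≠ ⊤) (hy : Benergy M p N y.1 y.2 ≠ ⊤)
    (hyJ : Jbar M p N y.1 ≠ ⊤) :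
    Pobj M p N μ ((1 - t) • x + t • y).1 ((1 - t) • x + t • y).2 ≤
      (((1 - t) * (Benergy M p N x.1 x.2).toReal + t * (Benergy M p N y.1 y.2).toReal +
        μ * (JbarR M p N y.1 + N / (N+1) * (∑ K', coarseM M p K') * -Real.log t) : ℝ) : EReal) := by
  have hs : 0 < 1 - t := sub_pos.2 ht₁
  have hB : Benergy M p N ((1 - t) • x + t • y).1 ((1 - t) • x + t • y).2 ≤
      ENNReal.ofReal ((1 - t) * (Benergy M p N x.1 x.2).toReal +
        t * (Benergy M p N y.1 y.2).toReal) := by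
    refine (Benergy_convex M p N x.1 y.1 x.2 y.2 hs ht₀).trans_eq ?_
    rw [ENNReal.ofReal_add (by positivity) (by positivity), ENNReal.ofReal_mul hs.le,
      ENNReal.ofReal_mul ht₀.le, ENNReal.ofReal_toReal hx, ENNReal.ofReal_toReal hy]
  have hle : ∀ k K', t * y.1 k K' ≤ ((1 - t) • x + t • y).1 k K' := fun k K' => by
    have := nonneg_of_Benergy_ne_top hx k K'
    simp only [Prod.fst_add, Prod.smul_fst, Pi.add_apply, Pi.smul_apply, smul_eq_mul]
    nlinarith
  have hypos := pos_of_Jbar_ne_top hyJ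
  rw [Pobj_eq_coe (ne_top_of_le_ne_top ENNReal.ofReal_ne_top hB)
    fun k K' hK' => (mul_pos ht₀ (hypos k K' hK')).trans_le (hle _ _)]
  have hJ := JbarR_le_of_mul_le M p N ht₀ hypos hle
  have hBr := ENNReal.toReal_le_of_le_ofReal (by positivity) hB
  exact_mod_cast add_le_add hBr (mul_le_mul_of_nonneg_left hJ hμ)

end

end OTFV

theorem barrier_suboptimality_general
    {T T' E : Type*} [Fintype T] [Fintype T'] [Fintype E] [DecidableEq T] [DecidableEq T']
    (M : Mesh T E) (p : T → T') (N : ℕ) (ρin ρf : T' → ℝ)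
    (xs : (Fin (N+2) → T' → ℝ) × (Fin (N+1) → E → ℝ))
    (hxs : xs ∈ Cset M p N ρin ρf)
    (hxsmin : ∀ y ∈ Cset M p N ρin ρf, Benergy M p N xs.1 xs.2 ≤ Benergy M p N y.1 y.2)
    (hxsfin : Benergy M p N xs.1 xs.2 ≠ ⊤)
    (μ : ℝ) (hμ : 0 < μ)
    (xμ : (Fin (N+2) → T' → ℝ) × (Fin (N+1) → E → ℝ))
    (hxμ : xμ ∈ Cset M p N ρin ρf)
    (hxμmin : ∀ y ∈ Cset M p N ρin ρf, Pobj M p N μ xμ.1 xμ.2 ≤ Pobj M p N μ y.1 y.2)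
    (hxμfin : Pobj M p N μ xμ.1 xμ.2 ≠ ⊤) :
    Benergy M p N xs.1 xs.2 ≤ Benergy M p N xμ.1 xμ.2 ∧
    Benergy M p N xμ.1 xμ.2 ≤ Benergy M p N xs.1 xs.2 +
      ENNReal.ofReal (μ * ((N : ℝ)/(N+1)) * ∑ K', coarseM M p K') := by
  obtain ⟨hBμ, hJμ⟩ := Benergy_ne_top_and_Jbar_ne_top hμ hxμfin
  refine ⟨hxsmin xμ hxμ, ?_⟩
  have hΩ : 0 ≤ ∑ K', coarseM M p K' := Finset.sum_nonneg fun K' _ => coarseM_nonneg M p K'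
  suffices h : (Benergy M p N xμ.1 xμ.2).toReal - (Benergy M p N xs.1 xs.2).toReal ≤
      μ * ((N : ℝ)/(N+1)) * ∑ K', coarseM M p K' by
    rw [← ENNReal.ofReal_toReal hBμ, ← ENNReal.ofReal_toReal hxsfin,
      ← ENNReal.ofReal_add ENNReal.toReal_nonneg (by positivity)]
    exact ENNReal.ofReal_le_ofReal (by linarith)
  refine le_of_forall_one_sub_mul_le_mul_neg_log (by positivity) fun t ht₀ ht₁ => ?_
  have hmix := convex_Cset M p N ρin ρf hxs hxμ (by linarith) ht₀.le (sub_add_cancel 1 t)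
  have hopt := (hxμmin _ hmix).trans (Pobj_convex_combo_le hμ.le ht₀ ht₁ hxsfin hBμ hJμ)
  rw [Pobj_eq_coe hBμ (pos_of_Jbar_ne_top hJμ), EReal.coe_le_coe_iff] at hopt
  linarith

theorem barrier_suboptimality
    {T T' E : Type*} [Fintype T] [Fintype T'] [Fintype E] [DecidableEq T] [DecidableEq T']
    (M : Mesh T E) (p : T → T') (N : ℕ) (ρin ρf : T' → ℝ)
    (hin : ∀ K', 0 ≤ ρin K') (hf : ∀ K', 0 ≤ ρf K')
    (hmass : ∑ K', ρin K' * coarseM M p K' = ∑ K', ρf K' * coarseM M p K')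
    (xs : (Fin (N+2) → T' → ℝ) × (Fin (N+1) → E → ℝ))
    (hxs : xs ∈ Cset M p N ρin ρf)
    (hxsmin : ∀ y ∈ Cset M p N ρin ρf, Benergy M p N xs.1 xs.2 ≤ Benergy M p N y.1 y.2)
    (hxsfin : Benergy M p N xs.1 xs.2 ≠ ⊤)
    (μ : ℝ) (hμ : 0 < μ)
    (xμ : (Fin (N+2) → T' → ℝ) × (Fin (N+1) → E → ℝ))
    (hxμ : xμ ∈ Cset M p N ρin ρf)
    (hxμmin : ∀ y ∈ Cset M p N ρin ρf, Pobj M p N μ xμ.1 xμ.2 ≤ Pobj M p N μ y.1 y.2)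
    (hxμfin : Pobj M p N μ xμ.1 xμ.2 ≠ ⊤) :
    Benergy M p N xs.1 xs.2 ≤ Benergy M p N xμ.1 xμ.2 ∧
    Benergy M p N xμ.1 xμ.2 ≤ Benergy M p N xs.1 xs.2 +
      ENNReal.ofReal (μ * ((N : ℝ)/(N+1)) * ∑ K', coarseM M p K') :=
  barrier_suboptimality_general M p N ρin ρf xs hxs hxsmin hxsfin μ hμ xμ hxμ hxμmin hxμfin
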